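/- Let a₁, a₂ > 0, b₁ < 0, b₂ ∈ ℝ, c > 0, and suppose b₁²/a₁² + b₂²/a₂² > c². Then there exists a unique λ* > 0 satisfying b₁²(a₂ + 2λ)² + b₂²(a₁ + 2λ)² = c²(a₁ + 2λ)²(a₂ + 2λ)², and the point (p*, q*) = (−b₁/(a₁ + 2λ*), −b₂/(a₂ + 2λ*)) minimizes (a₁/2)p² + b₁p + (a₂/2)q² + b₂q subject to p² + q² ≤ c² and p ≥ 0. -/

import Mathlib

/-!
Writing `x(λ) = (-b₁/(a₁+2λ), -b₂/(a₂+2λ))` for the stationary point of the Lagrangian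
`f + λ (p² + q² - c²)`, the secular function `λ ↦ ‖x(λ)‖²` is continuous and strictly decreasing
on `[0, ∞)` (because `b₁ ≠ 0`), exceeds `c²` at `λ = 0` and tends to `0`; so it crosses `c²` at
exactly one `λ* > 0`. At that `λ*`, completing the square gives
`f p q - f x(λ*) = Σ (aᵢ+2λ*)/2 (pᵢ - xᵢ)² + λ* (c² - p² - q²) ≥ 0` on the whole disk.
-/

open Filter Set Topology

noncomputable def secular (a1 a2 b1 b2 l : ℝ) : ℝ :=
  (b1 / (a1 + 2 * l)) ^ 2 + (b2 / (a2 + 2 * l)) ^ 2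

theorem existsUnique_pos_eq_of_strictAntiOn {g : ℝ → ℝ} {y z : ℝ}
    (hcont : ContinuousOn g (Ici 0)) (hanti : StrictAntiOn g (Ici 0))
    (hlim : Tendsto g atTop (𝓝 z)) (hz : z < y) (h0 : y < g 0) :
    ∃! l, 0 < l ∧ g l = y := by
  obtain ⟨L, hL⟩ := (hlim.eventually (gt_mem_nhds hz)).exists_forall_of_atTop
  obtain ⟨l, hl, hgl⟩ := intermediate_value_Icc' (le_max_right L 0)
    (hcont.mono Icc_subset_Ici_self) ⟨(hL _ (le_max_left L 0)).le, h0.le⟩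
  have hl0 : 0 < l := hl.1.lt_of_ne (by rintro rfl; exact h0.ne' hgl)
  exact ⟨l, ⟨hl0, hgl⟩, fun l' ⟨hl'0, hgl'⟩ =>
    hanti.injOn (mem_Ici.2 hl'0.le) (mem_Ici.2 hl0.le) (hgl'.trans hgl.symm)⟩

section SquaredQuotient

variable {a b : ℝ}

theorem strictAntiOn_sq_div (ha : 0 < a) (hb : b ≠ 0) :
    StrictAntiOn (fun l => (b / (a + 2 * l)) ^ 2) (Ici 0) := by
  intro x hx y _ hxy
  have hx0 : 0 < a + 2 * x := by linarith [mem_Ici.1 hx]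
  simp only [div_pow]
  exact div_lt_div_of_pos_left (sq_pos_of_ne_zero hb) (pow_pos hx0 2)
    (pow_lt_pow_left₀ (by linarith) hx0.le two_ne_zero)

theorem antitoneOn_sq_div (ha : 0 < a) : AntitoneOn (fun l => (b / (a + 2 * l)) ^ 2) (Ici 0) := by
  rcases eq_or_ne b 0 with rfl | hb
  · simpa using antitoneOn_const
  · exact (strictAntiOn_sq_div ha hb).antitoneOn

theorem continuousOn_sq_div (ha : 0 < a) :
    ContinuousOn (fun l => (b / (a + 2 * l)) ^ 2) (Ici 0) :=
  (continuousOn_const.div (by fun_prop) fun l hl => by linarith [mem_Ici.1 hl]).pow 2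

theorem tendsto_sq_div_atTop : Tendsto (fun l => (b / (a + 2 * l)) ^ 2) atTop (𝓝 0) := by
  have hden : Tendsto (fun l : ℝ => a + 2 * l) atTop atTop :=
    tendsto_atTop_add_const_left _ _ (tendsto_id.const_mul_atTop two_pos)
  simpa using (tendsto_const_nhds (x := b)).div_atTop hden |>.pow 2

end SquaredQuotient

theorem existsUnique_pos_secular_eq {a1 a2 b1 b2 c : ℝ} (ha1 : 0 < a1) (ha2 : 0 < a2)
    (hb1 : b1 ≠ 0) (hc : c ≠ 0) (h0 : c ^ 2 < secular a1 a2 b1 b2 0) :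
    ∃! l, 0 < l ∧ secular a1 a2 b1 b2 l = c ^ 2 := by
  exact existsUnique_pos_eq_of_strictAntiOn
    ((continuousOn_sq_div ha1).add (continuousOn_sq_div ha2))
    ((strictAntiOn_sq_div ha1 hb1).add_antitone (antitoneOn_sq_div ha2))
    (tendsto_sq_div_atTop.add tendsto_sq_div_atTop) (by simpa using sq_pos_of_ne_zero hc) h0

theorem secular_eq_iff {a1 a2 b1 b2 c l : ℝ} (hA : a1 + 2 * l ≠ 0) (hB : a2 + 2 * l ≠ 0) :
    b1^2*(a2+2*l)^2 + b2^2*(a1+2*l)^2 = c^2*(a1+2*l)^2*(a2+2*l)^2 ↔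
      secular a1 a2 b1 b2 l = c ^ 2 := by
  rw [secular, div_pow, div_pow, div_add_div _ _ (pow_ne_zero 2 hA) (pow_ne_zero 2 hB),
    div_eq_iff (by positivity)]
  constructor <;> intro h <;> linear_combination h

theorem quadratic_le_of_kkt {a1 a2 b1 b2 c l P Q p q : ℝ} (hl : 0 ≤ l)
    (hA : 0 ≤ a1 + 2 * l) (hB : 0 ≤ a2 + 2 * l)
    (hP : (a1 + 2 * l) * P = -b1) (hQ : (a2 + 2 * l) * Q = -b2) (hPQ : P ^ 2 + Q ^ 2 = c ^ 2)
    (hpq : p ^ 2 + q ^ 2 ≤ c ^ 2) :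
    a1/2*P^2 + b1*P + a2/2*Q^2 + b2*Q ≤ a1/2*p^2 + b1*p + a2/2*q^2 + b2*q := by
  have key : a1/2*p^2 + b1*p + a2/2*q^2 + b2*q - (a1/2*P^2 + b1*P + a2/2*Q^2 + b2*Q) =
      (a1+2*l)/2*(p-P)^2 + (a2+2*l)/2*(q-Q)^2 + l*(c^2 - p^2 - q^2) := by
    linear_combination (p - P) * hP + (q - Q) * hQ + l * hPQ
  have hslack : 0 ≤ l * (c ^ 2 - p ^ 2 - q ^ 2) := mul_nonneg hl (by linarith)
  nlinarith [mul_nonneg hA (sq_nonneg (p - P)), mul_nonneg hB (sq_nonneg (q - Q))]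

theorem stmt5 (a1 a2 b1 b2 c : ℝ) (ha1 : 0 < a1) (ha2 : 0 < a2) (hb1 : b1 < 0) (hc : 0 < c)
    (hout : b1^2/a1^2 + b2^2/a2^2 > c^2)
    (f : ℝ → ℝ → ℝ) (hf : ∀ p q, f p q = a1/2*p^2 + b1*p + a2/2*q^2 + b2*q) :
    (∃! l : ℝ, 0 < l ∧
        b1^2*(a2+2*l)^2 + b2^2*(a1+2*l)^2 = c^2*(a1+2*l)^2*(a2+2*l)^2) ∧
    ∀ l : ℝ, (0 < l ∧
        b1^2*(a2+2*l)^2 + b2^2*(a1+2*l)^2 = c^2*(a1+2*l)^2*(a2+2*l)^2) →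
      ((-b1/(a1+2*l))^2 + (-b2/(a2+2*l))^2 ≤ c^2 ∧ 0 ≤ -b1/(a1+2*l) ∧
        ∀ p q : ℝ, p^2 + q^2 ≤ c^2 → 0 ≤ p →
          f (-b1/(a1+2*l)) (-b2/(a2+2*l)) ≤ f p q) := by
  have hsec : ∀ l, 0 < l → (b1^2*(a2+2*l)^2 + b2^2*(a1+2*l)^2 = c^2*(a1+2*l)^2*(a2+2*l)^2 ↔
      secular a1 a2 b1 b2 l = c ^ 2) := fun l hl => secular_eq_iff (by positivity) (by positivity)
  refine ⟨?_, ?_⟩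
  · rw [existsUnique_congr fun l => and_congr_right (hsec l)]
    exact existsUnique_pos_secular_eq ha1 ha2 hb1.ne hc.ne'
      (by simpa [secular, div_pow] using hout)
  · rintro l ⟨hl, heq⟩
    have hA : 0 < a1 + 2 * l := by positivity
    have hB : 0 < a2 + 2 * l := by positivity
    have hPQ : (-b1/(a1+2*l))^2 + (-b2/(a2+2*l))^2 = c^2 := by
      simpa only [secular, neg_div, neg_sq] using (hsec l hl).1 heq
    refine ⟨hPQ.le, div_nonneg (by linarith) hA.le, fun p q hpq _ => ?_⟩
    simp only [hf]
    exact quadratic_le_of_kkt hl.le hA.le hB.le (mul_div_cancel₀ _ hA.ne')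
      (mul_div_cancel₀ _ hB.ne') hPQ hpq
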